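/- Let Y be a connected topological manifold (or more generally a path-connected, locally path-connected topological space), X ⊆ Y a connected open subset, f : X̃ → X and Ψ : Ỹ → Y universal covering maps, and g : X̃ → Ỹ a continuous lift of the composition of f with the inclusion i : X → Y (i.e. Ψ ∘ g = i ∘ f). If the induced homomorphism i* : π₁(X) → π₁(Y) is injective, then g is injective. -/

import Mathlib

open CategoryTheory FundamentalGroupoid Metric Set

/-- The homomorphism induced on fundamental groups by a continuous map. -/
noncomputable def pi1map {X Y : Type} [TopologicalSpace X] [TopologicalSpace Y]
    (φ : C(X, Y)) (x : X) :
    Aut (FundamentalGroupoid.mk x : FundamentalGroupoid X) →*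
      Aut (FundamentalGroupoid.mk (φ x) : FundamentalGroupoid Y) :=
  Functor.mapAut (FundamentalGroupoid.mk x)
    (πₘ (TopCat.ofHom φ : TopCat.of X ⟶ TopCat.of Y) : FundamentalGroupoid X ⥤ FundamentalGroupoid Y)

/-- `f` restricted to `U` is a covering map onto `Ω`. -/
def IsCoveringOnto {E F : Type} [TopologicalSpace E] [TopologicalSpace F]
    (f : E → F) (U : Set E) (Ω : Set F) : Prop :=
  Set.SurjOn f U Ω ∧
    ∃ h : Set.MapsTo f U Ω, IsCoveringMap (Set.MapsTo.restrict f U Ω h)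

/-!
Two points `a`, `b` of `X̃` with the same image under `g` also have the same image under `f`,
so a path `γ` from `a` to `b` projects to a loop `f ∘ γ` in `X`. Its image in `Y` is `Ψ ∘ g ∘ γ`,
which is null-homotopic because `g ∘ γ` is a loop in the simply connected `Ỹ`. Injectivity of
`i*` at `f x₀` transfers to `f a` along the image under `f` of a path from `x₀` to `a`, so
`f ∘ γ` is null-homotopic in `X`; lifting this null-homotopy through the covering `f` shows that
`γ` is homotopic to the constant path at `a` relative to its endpoints, so `b = a`.
-/

open unitInterval

theorem CategoryTheory.Functor.map_injective_of_mapAut_injective {C D : Type*} [Groupoid C]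
    [Category D] (F : C ⥤ D) {c x y : C} (hF : Function.Injective (F.mapAut c)) (w : c ⟶ x)
    (w' : y ⟶ c) : Function.Injective (F.map : (x ⟶ y) → (F.obj x ⟶ F.obj y)) := by
  intro u v huv
  let conj (u : x ⟶ y) : Aut c := (Groupoid.isoEquivHom c c).symm (w ≫ u ≫ w')
  have hconj : conj u = conj v := hF <| Aut.ext <| by
    change F.map (w ≫ u ≫ w') = F.map (w ≫ v ≫ w')
    simp only [F.map_comp, huv]
  simpa only [conj, Groupoid.isoEquivHom, Equiv.coe_fn_symm_mk, cancel_epi, cancel_mono]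
    using congrArg Iso.hom hconj

theorem Path.Homotopic.of_map_of_pi1map_injective {X Y : Type} [TopologicalSpace X]
    [TopologicalSpace Y] (φ : C(X, Y)) {x₀ x y : X} (hinj : Function.Injective (pi1map φ x₀))
    (hx : Joined x₀ x) (hy : Joined x₀ y) {α β : Path x y}
    (h : (α.map φ.continuous).Homotopic (β.map φ.continuous)) : α.Homotopic β := by
  have hmap := Functor.map_injective_of_mapAut_injective
    (πₘ (TopCat.ofHom φ : TopCat.of X ⟶ TopCat.of Y)) (x := .mk x) (y := .mk y) hinj
    (Path.Homotopic.Quotient.mk hx.somePath) (Path.Homotopic.Quotient.mk hy.somePath.symm)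
  exact Path.Homotopic.Quotient.eq.mp (hmap (Path.Homotopic.Quotient.eq.mpr h))

theorem ContinuousMap.HomotopicRel.of_comp_of_pi1map_injective {X Y : Type}
    [TopologicalSpace X] [TopologicalSpace Y] {φ : C(X, Y)} {x₀ : X} {γ₀ γ₁ : C(I, X)}
    (h : (φ.comp γ₀).HomotopicRel (φ.comp γ₁) {0, 1})
    (hinj : Function.Injective (pi1map φ x₀))
    (hx : Joined x₀ (γ₀ 0)) (h₀ : γ₀ 0 = γ₁ 0) (h₁ : γ₀ 1 = γ₁ 1) :
    γ₀.HomotopicRel γ₁ {0, 1} :=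
  Path.Homotopic.of_map_of_pi1map_injective φ (α := ⟨γ₀, rfl, rfl⟩)
    (β := ⟨γ₁, h₀.symm, h₁.symm⟩) hinj hx (hx.trans ⟨⟨γ₀, rfl, rfl⟩⟩) h

theorem ContinuousMap.homotopicRel_of_simplyConnectedSpace {Y : Type*} [TopologicalSpace Y]
    [SimplyConnectedSpace Y] {γ₀ γ₁ : C(I, Y)} (h₀ : γ₀ 0 = γ₁ 0) (h₁ : γ₀ 1 = γ₁ 1) :
    γ₀.HomotopicRel γ₁ {0, 1} :=
  SimplyConnectedSpace.paths_homotopic (⟨γ₀, rfl, rfl⟩ : Path (γ₀ 0) (γ₀ 1))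
    ⟨γ₁, h₀.symm, h₁.symm⟩

theorem lift_injective_of_pi1_injective_general
    {Y Xt Yt : Type} [TopologicalSpace Y] [TopologicalSpace Xt] [TopologicalSpace Yt]
    (X : Set Y)
    [SimplyConnectedSpace Xt] [SimplyConnectedSpace Yt]
    (f : Xt → X) (hf : IsCoveringMap f)
    (Ψ : Yt → Y) (hΨ : IsCoveringMap Ψ)
    (g : Xt → Yt) (hg : Continuous g)
    (hlift : ∀ z, Ψ (g z) = (f z : Y))
    (x₀ : Xt)
    (hinj : Function.Injective
      (pi1map (⟨Subtype.val, continuous_subtype_val⟩ : C(X, Y)) (f x₀))) :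
    Function.Injective g := by
  intro a b hab
  have hfab : f a = f b := Subtype.ext <| by simp only [← hlift, hab]
  obtain ⟨γ⟩ := PathConnectedSpace.joined a b
  let i : C(X, Y) := ⟨Subtype.val, continuous_subtype_val⟩
  let fC : C(Xt, X) := ⟨f, hf.continuous⟩
  let gC : C(Xt, Yt) := ⟨g, hg⟩
  let a' : C(I, Xt) := .const I a
  have hYt : (gC.comp γ).HomotopicRel (gC.comp a') {0, 1} :=
    ContinuousMap.homotopicRel_of_simplyConnectedSpace (by simp [a']) (by simp [a', gC, hab])
  have hY : (i.comp (fC.comp γ)).HomotopicRel (i.comp (fC.comp a')) {0, 1} := by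
    convert hYt.comp_continuousMap ⟨Ψ, hΨ.continuous⟩ using 1 <;> ext <;>
      simp [i, fC, gC, hlift]
  have hX : (fC.comp γ).HomotopicRel (fC.comp a') {0, 1} :=
    hY.of_comp_of_pi1map_injective hinj ((PathConnectedSpace.joined x₀ (γ 0)).map hf.continuous)
      (by simp [a']) (by simp [a', fC, hfab])
  have hγ : γ.toContinuousMap.HomotopicRel a' {0, 1} :=
    (hf.homotopicRel_iff_comp ⟨0, .inl rfl, by simp [a']⟩).mpr hX
  simpa [a'] using (hγ.fst_eq_snd (.inr rfl)).symm

/-- If `i* : π₁(X) → π₁(Y)` is injective, then any lift `g` of the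
universal covering `f : X̃ → X` through the universal covering `Ψ : Ỹ → Y` is injective. -/
theorem lift_injective_of_pi1_injective
    {Y Xt Yt : Type} [TopologicalSpace Y] [TopologicalSpace Xt] [TopologicalSpace Yt]
    [PathConnectedSpace Y] [LocallyPathConnectedSpace Y]
    (X : Set Y) (hXopen : IsOpen X) (hXconn : IsConnected X)
    [SimplyConnectedSpace Xt] [SimplyConnectedSpace Yt]
    (f : Xt → X) (hf : IsCoveringMap f)
    (Ψ : Yt → Y) (hΨ : IsCoveringMap Ψ)
    (g : Xt → Yt) (hg : Continuous g)
    (hlift : ∀ z, Ψ (g z) = (f z : Y))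
    (x₀ : Xt)
    (hinj : Function.Injective
      (pi1map (⟨Subtype.val, continuous_subtype_val⟩ : C(X, Y)) (f x₀))) :
    Function.Injective g :=
  lift_injective_of_pi1_injective_general X f hf Ψ hΨ g hg hlift x₀ hinj
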